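/- arXiv:1812.09002 — 2 statements merged into one kernel-verified Lean document; each statement's English description precedes it below -/
import Mathlib

section
/- Given any event-labeled gene tree (T;t,σ), there exists a species network N for (T;t,σ), i.e., a network N on 𝕊 together with a TreeNet-reconciliation map from (T;t,σ) to N. -/
namespace Phylo

/-- A directed multigraph: `tail e` and `head e` give the endpoints of an arc `e`.
    Multi-arcs are allowed since distinct arcs may have the same endpoints. -/
structure MGraph (V : Type) (E : Type) where
  tail : E → V
  head : E → V

namespace MGraph

variable {V E : Type}

/-- `G.Adj u v` iff there is an arc from `u` to `v`. -/
def Adj (G : MGraph V E) (u v : V) : Prop :=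
  ∃ e : E, G.tail e = u ∧ G.head e = v

/-- `G.Reach u v` iff there is a directed path (possibly a single vertex) from `u` to `v`. -/
def Reach (G : MGraph V E) (u v : V) : Prop :=
  Relation.ReflTransGen G.Adj u v

/-- `G.vle v u` means `v ⪯ u` (i.e. `v` is a descendant of `u`). -/
def vle (G : MGraph V E) (v u : V) : Prop := G.Reach u v

/-- `G.vlt v u` means `v ≺ u` (i.e. `v` is strictly below `u`). -/
def vlt (G : MGraph V E) (v u : V) : Prop := G.Reach u v ∧ v ≠ u

/-- indegree of a vertex -/
noncomputable def inDeg (G : MGraph V E) (v : V) : ℕ :=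
  Nat.card {e : E // G.head e = v}

/-- outdegree of a vertex -/
noncomputable def outDeg (G : MGraph V E) (v : V) : ℕ :=
  Nat.card {e : E // G.tail e = v}

/-- `G` is a DAG. -/
def Acyclic (G : MGraph V E) : Prop :=
  ∀ v : V, ¬ Relation.TransGen G.Adj v v

/-- `G` has no multi-arcs. -/
def MultiArcFree (G : MGraph V E) : Prop :=
  ∀ e f : E, G.tail e = G.tail f → G.head e = G.head f → e = f

/-- A point of `V ∪ E`, where an arc is represented by its head
    (used for extending `Q`-sets to arcs). -/
def hpt (G : MGraph V E) : V ⊕ E → V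
  | Sum.inl v => v
  | Sum.inr e => G.head e

/-- A point of `V ∪ E`, where an arc is represented by its tail
    (used for extending `lca` to arcs). -/
def tpt (G : MGraph V E) : V ⊕ E → V
  | Sum.inl v => v
  | Sum.inr e => G.tail e

/-- The strict order `≺` on `V ∪ E`:
    `x ≺ y` for vertices means `x ⪯ y` and `x ≠ y`;
    a vertex `x ≺` an arc `e = (u,v)` iff `x ⪯ v`;
    an arc `e = (u,v) ≺` a vertex `x` iff `u ⪯ x`;
    for arcs `e = (u,v)` and `f = (a,b)`: `e ≺ f` iff `v ≺ u ⪯ b ≺ a`. -/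
def slt (G : MGraph V E) : V ⊕ E → V ⊕ E → Prop
  | Sum.inl x, Sum.inl y => G.vlt x y
  | Sum.inl x, Sum.inr e => G.vle x (G.head e)
  | Sum.inr e, Sum.inl x => G.vle (G.tail e) x
  | Sum.inr e, Sum.inr f =>
      G.vlt (G.head e) (G.tail e) ∧ G.vle (G.tail e) (G.head f) ∧
        G.vlt (G.head f) (G.tail f)

/-- The (non-strict) order `⪯` on `V ∪ E`. -/
def sle (G : MGraph V E) (a b : V ⊕ E) : Prop := a = b ∨ G.slt a b

/-- `Q_N(x,y)`: the set of vertices `z` admitting directed paths from `z` to `x`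
    and from `z` to `y` which are separated by `z`, i.e. start with different
    children of `z`. -/
def QSet (G : MGraph V E) (x y : V) : Set V :=
  {z | ∃ c₁ c₂ : V, c₁ ≠ c₂ ∧ G.Adj z c₁ ∧ G.Adj z c₂ ∧ G.Reach c₁ x ∧ G.Reach c₂ y}

/-- `l` is the least common ancestor of the set `A`:
    a `⪯`-minimal common ancestor of all of `A`. -/
def IsLca (G : MGraph V E) (A : Set V) (l : V) : Prop :=
  (∀ a ∈ A, G.Reach l a) ∧ ∀ l' : V, (∀ a ∈ A, G.Reach l' a) → G.Reach l' l

/-- A directed path, given as its (nonempty, repetition-free) list of vertices. -/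
def IsDiPath (G : MGraph V E) (p : List V) : Prop :=
  p ≠ [] ∧ p.Chain' G.Adj ∧ p.Nodup

end MGraph

/-- Event labels for inner vertices of gene trees: speciation or duplication. -/
inductive Event : Type
  | spec : Event
  | dupl : Event
  deriving DecidableEq

variable {V E W F D U S : Type}

/-- `(G, lv, ρ)` is a (rooted phylogenetic) network with leaf set `lv` and root `ρ`:
    (N1) the root has indegree 0 and outdegree 1 and its unique child has
    indegree 1 and outdegree at least 2;
    (N2) the leaves are exactly the vertices of outdegree 0 and indegree 1;
    (N3) every other non-leaf vertex is a tree vertex (indegree 1, outdegree > 1)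
    or a hybrid vertex (indegree > 1, outdegree 1);
    moreover the leaf set has at least two elements and everything is finite. -/
structure IsNetwork (G : MGraph V E) (lv : Set V) (ρ : V) : Prop where
  finV : Finite V
  finE : Finite E
  acyclic : G.Acyclic
  root_in : G.inDeg ρ = 0
  root_out : G.outDeg ρ = 1
  root_child : ∀ c : V, G.Adj ρ c → G.inDeg c = 1 ∧ 2 ≤ G.outDeg c
  leaf_iff : ∀ v : V, v ∈ lv ↔ (G.outDeg v = 0 ∧ G.inDeg v = 1)
  inner_deg : ∀ v : V, v ∉ lv → v ≠ ρ →
      (G.inDeg v = 1 ∧ 2 ≤ G.outDeg v) ∨ (2 ≤ G.inDeg v ∧ G.outDeg v = 1)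
  two_leaves : ∃ a b : V, a ∈ lv ∧ b ∈ lv ∧ a ≠ b

/-- no hybrid vertices -/
def NoHybrid (G : MGraph V E) : Prop := ∀ v : V, G.inDeg v ≤ 1

/-- A (rooted) phylogenetic tree: a multi-arc free network without hybrid vertices. -/
def IsPhyloTree (G : MGraph V E) (lv : Set V) (ρ : V) : Prop :=
  IsNetwork G lv ρ ∧ G.MultiArcFree ∧ NoHybrid G

/-- A network (or tree) "on 𝕊": its leaves are in bijection with the species set `S`
    via the labeling `sp`. -/
structure IsLeafLabeling (G : MGraph V E) (lv : Set V) (sp : S → V) : Prop where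
  inj : Function.Injective sp
  mem : ∀ s : S, sp s ∈ lv
  surj : ∀ v ∈ lv, ∃ s : S, sp s = v

/-- `(G, lv, ρ, σ)` is the underlying structure of an event-labeled gene tree on the
    gene set `lv`: a reduced tree (root of indegree 0 and outdegree ≥ 2, all other
    inner vertices of indegree 1 and outdegree ≥ 2) together with a surjective
    gene-species map `σ` whose image has more than one element. -/
structure IsGeneTree (G : MGraph V E) (lv : Set V) (ρ : V) (σ : V → S) : Prop where
  finV : Finite V
  finE : Finite E
  acyclic : G.Acyclic
  multiarc_free : G.MultiArcFree
  root_in : G.inDeg ρ = 0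
  root_out : 2 ≤ G.outDeg ρ
  leaf_iff : ∀ v : V, v ∈ lv ↔ (G.outDeg v = 0 ∧ G.inDeg v = 1)
  inner_deg : ∀ v : V, v ∉ lv → v ≠ ρ → G.inDeg v = 1 ∧ 2 ≤ G.outDeg v
  sigma_surj : ∀ s : S, ∃ g ∈ lv, σ g = s
  sigma_nontriv : ∃ g g' : V, g ∈ lv ∧ g' ∈ lv ∧ σ g ≠ σ g'

/-- `L_T(x)`: the set of leaves below or equal to `x`. -/
def leavesBelow (G : MGraph V E) (lv : Set V) (x : V) : Set V :=
  {g | g ∈ lv ∧ G.Reach x g}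

/-- A TreeNet-reconciliation map `μ` from the event-labeled gene tree `(T;t,σ)`
    to the network `N` (with species labeling `sp`):
    (R1) leaves are mapped to the species containing them;
    (R2.i) a speciation vertex is mapped to a vertex of `N` separating the images
    of two of its children (i.e. `μ x ∈ Q²`);
    (R2.ii) a duplication vertex is mapped to an arc of `N`;
    (R3) ancestor relations are preserved (strictly, unless both events are
    duplications). -/
structure IsTreeNetRecon (T : MGraph V E) (lvT : Set V) (t : V → Event) (σ : V → S)
    (N : MGraph W F) (sp : S → W) (μ : V → W ⊕ F) : Prop where
  R1 : ∀ x ∈ lvT, μ x = Sum.inl (sp (σ x))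
  R2i : ∀ x : V, x ∉ lvT → t x = Event.spec →
      ∃ w : W, μ x = Sum.inl w ∧ ∃ c₁ c₂ : V, T.Adj x c₁ ∧ T.Adj x c₂ ∧
        w ∈ N.QSet (N.hpt (μ c₁)) (N.hpt (μ c₂))
  R2ii : ∀ x : V, x ∉ lvT → t x = Event.dupl → ∃ e : F, μ x = Sum.inr e
  R3d : ∀ x y : V, T.vlt x y → x ∉ lvT → y ∉ lvT →
      t x = Event.dupl → t y = Event.dupl → N.sle (μ x) (μ y)
  R3s : ∀ x y : V, T.vlt x y →
      ¬ (x ∉ lvT ∧ y ∉ lvT ∧ t x = Event.dupl ∧ t y = Event.dupl) →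
      N.slt (μ x) (μ y)

/-!
The network is a ladder. Two rails `p₀ → ⋯ → pₙ` and `q₀ → ⋯ → qₙ` hang below the
child of the root; for every `i < n` both `pᵢ` and `qᵢ` point to two hybrids `aᵢ`, `bᵢ`,
with `aᵢ → pᵢ₊₁` and `bᵢ → qᵢ₊₁`; the bottoms `pₙ`, `qₙ` both point to a hybrid above
the leaf of each species. Thus every rail vertex `pᵢ` separates its two children `aᵢ`, `bᵢ`,
and each of them reaches every rail vertex of level `≥ i + 2`, every hybrid of level
`≥ i + 1` and every leaf. A gene-tree vertex at depth `d` is sent to `p_{2d}` if it is a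
speciation and to the arc `p_{2d} a_{2d}` if it is a duplication; since a child is one
level deeper, i.e. two rungs lower, all reconciliation axioms hold.
-/

namespace MGraph

variable {G : MGraph V E} {u v : V}

theorem reach_antisymm (hG : G.Acyclic) (huv : G.Reach u v) (hvu : G.Reach v u) : u = v := by
  rcases huv.cases_head with rfl | ⟨w, huw, hwv⟩
  · rfl
  · exact absurd (Relation.TransGen.head' huw (hwv.trans hvu)) (hG u)

theorem vlt_of_transGen (hG : G.Acyclic) (h : Relation.TransGen G.Adj u v) : G.vlt v u :=
  ⟨h.to_reflTransGen, by rintro rfl; exact hG v h⟩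

theorem vlt_of_adj (hG : G.Acyclic) (h : G.Adj u v) : G.vlt v u :=
  vlt_of_transGen hG (.single h)

theorem vlt_head_tail (hG : G.Acyclic) (e : E) : G.vlt (G.head e) (G.tail e) :=
  vlt_of_adj hG ⟨e, rfl, rfl⟩

theorem acyclic_of_adj_lt (f : V → ℕ) (hf : ∀ u v, G.Adj u v → f u < f v) : G.Acyclic := by
  intro v hv
  have key : ∀ a b, Relation.TransGen G.Adj a b → f a < f b := fun a b h => by
    induction h with
    | single h => exact hf _ _ h
    | tail _ h ih => exact ih.trans (hf _ _ h)
  exact (key v v hv).false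

theorem inDeg_eq_zero (h : ∀ e, G.head e ≠ v) : G.inDeg v = 0 :=
  have : IsEmpty {e // G.head e = v} := ⟨fun e => h e e.2⟩
  Nat.card_of_isEmpty

theorem outDeg_eq_zero (h : ∀ e, G.tail e ≠ v) : G.outDeg v = 0 :=
  have : IsEmpty {e // G.tail e = v} := ⟨fun e => h e e.2⟩
  Nat.card_of_isEmpty

theorem inDeg_eq_one {e : E} (he : G.head e = v) (h : ∀ f, G.head f = v → f = e) :
    G.inDeg v = 1 :=
  Nat.card_eq_one_iff_exists.2 ⟨⟨e, he⟩, fun f => Subtype.ext (h f f.2)⟩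

theorem outDeg_eq_one {e : E} (he : G.tail e = v) (h : ∀ f, G.tail f = v → f = e) :
    G.outDeg v = 1 :=
  Nat.card_eq_one_iff_exists.2 ⟨⟨e, he⟩, fun f => Subtype.ext (h f f.2)⟩

theorem two_le_inDeg [Finite E] {e f : E} (hef : e ≠ f) (he : G.head e = v)
    (hf : G.head f = v) : 2 ≤ G.inDeg v :=
  Finite.one_lt_card_iff_nontrivial.2 ⟨⟨e, he⟩, ⟨f, hf⟩, by simpa [Subtype.ext_iff] using hef⟩

theorem two_le_outDeg [Finite E] {e f : E} (hef : e ≠ f) (he : G.tail e = v)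
    (hf : G.tail f = v) : 2 ≤ G.outDeg v :=
  Finite.one_lt_card_iff_nontrivial.2 ⟨⟨e, he⟩, ⟨f, hf⟩, by simpa [Subtype.ext_iff] using hef⟩

theorem exists_adj_of_outDeg_pos (h : 0 < G.outDeg v) : ∃ c, G.Adj v c := by
  obtain ⟨⟨e, he⟩⟩ := (Nat.card_pos_iff.1 h).1
  exact ⟨G.head e, e, he, rfl⟩

theorem not_adj_of_outDeg_eq_zero [Finite E] (h : G.outDeg v = 0) (c : V) : ¬ G.Adj v c := by
  rintro ⟨e, he, -⟩
  exact (Nat.card_ne_zero.2 ⟨⟨⟨e, he⟩⟩, inferInstance⟩) h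

noncomputable def depth (G : MGraph V E) (v : V) : ℕ := {u | G.vlt v u}.ncard

theorem depth_lt_depth [Finite V] (hG : G.Acyclic) (h : G.vlt v u) : G.depth u < G.depth v := by
  refine Set.ncard_lt_ncard ⟨fun w hw => ⟨hw.1.trans h.1, ?_⟩, fun hsub => (hsub h).2 rfl⟩
    (Set.toFinite _)
  rintro rfl
  exact h.2 (reach_antisymm hG hw.1 h.1)

theorem depth_lt_card [Finite V] (v : V) : G.depth v < Nat.card V := by
  rw [← Set.ncard_univ]
  exact Set.ncard_lt_ncard ⟨Set.subset_univ _, fun h => (h (Set.mem_univ v)).2 rfl⟩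
    (Set.toFinite _)

end MGraph

namespace IsGeneTree

variable {T : MGraph V E} {lvT : Set V} {ρT : V} {σ : V → S}

theorem not_mem_of_vlt (hT : IsGeneTree T lvT ρT σ) {x y : V} (h : T.vlt x y) : y ∉ lvT := by
  intro hy
  have := hT.finE
  rcases h.1.cases_head with rfl | ⟨c, hc, -⟩
  · exact h.2 rfl
  · exact MGraph.not_adj_of_outDeg_eq_zero ((hT.leaf_iff y).1 hy).1 c hc

theorem exists_adj (hT : IsGeneTree T lvT ρT σ) {x : V} (hx : x ∉ lvT) : ∃ c, T.Adj x c := by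
  refine MGraph.exists_adj_of_outDeg_pos ?_
  by_cases hρ : x = ρT
  · exact hρ ▸ lt_of_lt_of_le two_pos hT.root_out
  · exact lt_of_lt_of_le two_pos (hT.inner_deg x hx hρ).2

theorem finite_species (hT : IsGeneTree T lvT ρT σ) : Finite S :=
  have := hT.finV
  Finite.of_surjective σ fun s => (hT.sigma_surj s).imp fun _ h => h.2

end IsGeneTree

/-- `rail b i` is `pᵢ` for `b = true` and `qᵢ` for `b = false`; likewise `hybrid true i = aᵢ`
and `hybrid false i = bᵢ`. -/
inductive LadderVertex (S : Type) (n : ℕ) : Type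
  | root : LadderVertex S n
  | top : LadderVertex S n
  | rail : Bool → Fin (n + 1) → LadderVertex S n
  | hybrid : Bool → Fin n → LadderVertex S n
  | join : S → LadderVertex S n
  | leaf : S → LadderVertex S n
  deriving Fintype

inductive LadderArc (S : Type) (n : ℕ) : Type
  | rootArc : LadderArc S n
  | start : Bool → LadderArc S n
  | down : Bool → Bool → Fin n → LadderArc S n
  | up : Bool → Fin n → LadderArc S n
  | toJoin : Bool → S → LadderArc S n
  | toLeaf : S → LadderArc S n
  deriving Fintype

def ladder (S : Type) (n : ℕ) : MGraph (LadderVertex S n) (LadderArc S n) where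
  tail
    | .rootArc => .root
    | .start _ => .top
    | .down b _ i => .rail b i.castSucc
    | .up c i => .hybrid c i
    | .toJoin b _ => .rail b (Fin.last n)
    | .toLeaf s => .join s
  head
    | .rootArc => .top
    | .start b => .rail b 0
    | .down _ c i => .hybrid c i
    | .up c i => .rail c i.succ
    | .toJoin _ s => .join s
    | .toLeaf s => .leaf s

namespace Ladder

open LadderVertex LadderArc MGraph

variable {n : ℕ}

def rank : LadderVertex S n → ℕ
  | .root => 0
  | .top => 1
  | .rail _ i => 2 * i + 2
  | .hybrid _ i => 2 * i + 3
  | .join _ => 2 * n + 4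
  | .leaf _ => 2 * n + 5

theorem acyclic : (ladder S n).Acyclic :=
  acyclic_of_adj_lt rank fun _ _ ⟨e, he, he'⟩ => by
    subst he he'
    cases e <;> simp [ladder, rank]; omega

theorem adj (e : LadderArc S n) : (ladder S n).Adj ((ladder S n).tail e) ((ladder S n).head e) :=
  ⟨e, rfl, rfl⟩

theorem reach_rail_rail (b : Bool) {i j : Fin (n + 1)} (h : i ≤ j) :
    (ladder S n).Reach (rail b i) (rail b j) := by
  induction j using Fin.induction with
  | zero => rw [Fin.le_zero_iff.1 h]; exact .refl
  | succ k ih =>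
    rcases eq_or_lt_of_le h with rfl | hlt
    · exact .refl
    · exact (ih (Fin.le_castSucc_iff.2 hlt)).tail (adj (down b b k)) |>.tail (adj (up b k))

theorem reach_rail_hybrid (b c : Bool) {i : Fin (n + 1)} {k : Fin n} (h : i ≤ k.castSucc) :
    (ladder S n).Reach (rail b i) (hybrid c k) :=
  (reach_rail_rail b h).tail (adj (down b c k))

theorem reach_hybrid_hybrid (c c' : Bool) {k k' : Fin n} (h : (k : ℕ) < k') :
    (ladder S n).Reach (hybrid c k) (hybrid c' k') :=
  .head (adj (up c k)) (reach_rail_hybrid c c' (by simp [Fin.le_def]; omega))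

theorem reach_hybrid_rail (c b : Bool) {k : Fin n} {j : Fin (n + 1)} (h : (k : ℕ) + 2 ≤ j) :
    (ladder S n).Reach (hybrid c k) (rail b j) := by
  have hj : (j : ℕ) - 1 < n := by omega
  rw [show j = Fin.succ ⟨j - 1, hj⟩ from Fin.ext (by simp; omega)]
  exact (reach_hybrid_hybrid c b (by simp; omega)).tail (adj (up b _))

theorem reach_rail_leaf (b : Bool) (i : Fin (n + 1)) (s : S) :
    (ladder S n).Reach (rail b i) (leaf s) :=
  (reach_rail_rail b (Fin.le_last i)).tail (adj (toJoin b s)) |>.tail (adj (toLeaf s))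

theorem reach_hybrid_leaf (c : Bool) (k : Fin n) (s : S) :
    (ladder S n).Reach (hybrid c k) (leaf s) :=
  .head (adj (up c k)) (reach_rail_leaf c k.succ s)

instance [Finite S] : Finite (LadderVertex S n) :=
  have := Fintype.ofFinite S
  inferInstance

instance [Finite S] : Finite (LadderArc S n) :=
  have := Fintype.ofFinite S
  inferInstance

theorem inDeg_root : (ladder S n).inDeg root = 0 :=
  inDeg_eq_zero fun e => by cases e <;> simp [ladder]

theorem outDeg_root : (ladder S n).outDeg root = 1 :=
  outDeg_eq_one (e := rootArc) rfl fun f hf => by cases f <;> simp_all [ladder]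

theorem inDeg_top : (ladder S n).inDeg top = 1 :=
  inDeg_eq_one (e := rootArc) rfl fun f hf => by cases f <;> simp_all [ladder]

theorem two_le_outDeg_top [Finite S] : 2 ≤ (ladder S n).outDeg top :=
  two_le_outDeg (e := start true) (f := start false) (by simp) rfl rfl

theorem inDeg_rail (b : Bool) (i : Fin (n + 1)) : (ladder S n).inDeg (rail b i) = 1 := by
  cases i using Fin.cases with
  | zero => exact inDeg_eq_one (e := start b) rfl fun f hf => by cases f <;> simp_all [ladder]
  | succ k =>
    exact inDeg_eq_one (e := up b k) rfl fun f hf => by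
      cases f <;> simp_all [ladder, (Fin.succ_ne_zero k).symm]

theorem two_le_outDeg_rail [Finite S] {s₁ s₂ : S} (hs : s₁ ≠ s₂) (b : Bool) (i : Fin (n + 1)) :
    2 ≤ (ladder S n).outDeg (rail b i) := by
  cases i using Fin.lastCases with
  | last => exact two_le_outDeg (e := toJoin b s₁) (f := toJoin b s₂) (by simpa) rfl rfl
  | cast k => exact two_le_outDeg (e := down b true k) (f := down b false k) (by simp) rfl rfl

theorem two_le_inDeg_hybrid [Finite S] (c : Bool) (k : Fin n) :
    2 ≤ (ladder S n).inDeg (hybrid c k) :=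
  two_le_inDeg (e := down true c k) (f := down false c k) (by simp) rfl rfl

theorem outDeg_hybrid (c : Bool) (k : Fin n) : (ladder S n).outDeg (hybrid c k) = 1 :=
  outDeg_eq_one (e := up c k) rfl fun f hf => by cases f <;> simp_all [ladder]

theorem two_le_inDeg_join [Finite S] (s : S) : 2 ≤ (ladder S n).inDeg (join s) :=
  two_le_inDeg (e := toJoin true s) (f := toJoin false s) (by simp) rfl rfl

theorem outDeg_join (s : S) : (ladder S n).outDeg (join s) = 1 :=
  outDeg_eq_one (e := toLeaf s) rfl fun f hf => by cases f <;> simp_all [ladder]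

theorem inDeg_leaf (s : S) : (ladder S n).inDeg (leaf s) = 1 :=
  inDeg_eq_one (e := toLeaf s) rfl fun f hf => by cases f <;> simp_all [ladder]

theorem outDeg_leaf (s : S) : (ladder S n).outDeg (leaf s) = 0 :=
  outDeg_eq_zero fun e => by cases e <;> simp [ladder]

theorem isNetwork [Finite S] {s₁ s₂ : S} (hs : s₁ ≠ s₂) :
    IsNetwork (ladder S n) (Set.range leaf) root where
  finV := inferInstance
  finE := inferInstance
  acyclic := acyclic
  root_in := inDeg_root
  root_out := outDeg_root
  root_child := by
    rintro c ⟨e, he, rfl⟩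
    cases e <;> simp only [ladder, reduceCtorEq] at he
    exact ⟨inDeg_top, two_le_outDeg_top⟩
  leaf_iff v := by
    refine ⟨by rintro ⟨s, rfl⟩; exact ⟨outDeg_leaf s, inDeg_leaf s⟩, fun ⟨hout, hin⟩ => ?_⟩
    cases v with
    | root => simp [inDeg_root] at hin
    | top => have := two_le_outDeg_top (S := S) (n := n); omega
    | rail b i => have := two_le_outDeg_rail hs b i; omega
    | hybrid c k => simp [outDeg_hybrid] at hout
    | join s => simp [outDeg_join] at hout
    | leaf s => exact ⟨s, rfl⟩
  inner_deg v hv hρ := by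
    cases v with
    | root => exact absurd rfl hρ
    | top => exact .inl ⟨inDeg_top, two_le_outDeg_top⟩
    | rail b i => exact .inl ⟨inDeg_rail b i, two_le_outDeg_rail hs b i⟩
    | hybrid c k => exact .inr ⟨two_le_inDeg_hybrid c k, outDeg_hybrid c k⟩
    | join s => exact .inr ⟨two_le_inDeg_join s, outDeg_join s⟩
    | leaf s => exact absurd ⟨s, rfl⟩ hv
  two_leaves := ⟨leaf s₁, leaf s₂, ⟨s₁, rfl⟩, ⟨s₂, rfl⟩, by simpa⟩

theorem isLeafLabeling : IsLeafLabeling (ladder S n) (Set.range leaf) leaf where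
  inj _ _ := LadderVertex.leaf.inj
  mem s := ⟨s, rfl⟩
  surj _ hv := hv

end Ladder

section Reconciliation

open LadderVertex LadderArc MGraph Ladder

variable {n : ℕ} {T : MGraph V E} {lvT : Set V} {ρT : V} {t : V → Event} {σ : V → S}
  {lvl : V → Fin n}

open Classical in
noncomputable def ladderMap (lvT : Set V) (t : V → Event) (σ : V → S) (lvl : V → Fin n) :
    V → LadderVertex S n ⊕ LadderArc S n := fun x =>
  if x ∈ lvT then .inl (leaf (σ x))
  else
    match t x with
    | .spec => .inl (rail true (lvl x).castSucc)
    | .dupl => .inr (down true true (lvl x))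

theorem ladderMap_of_mem {x : V} (hx : x ∈ lvT) :
    ladderMap lvT t σ lvl x = .inl (leaf (σ x)) := by
  simp [ladderMap, hx]

theorem ladderMap_of_spec {x : V} (hx : x ∉ lvT) (ht : t x = .spec) :
    ladderMap lvT t σ lvl x = .inl (rail true (lvl x).castSucc) := by
  simp [ladderMap, hx, ht]

theorem ladderMap_of_dupl {x : V} (hx : x ∉ lvT) (ht : t x = .dupl) :
    ladderMap lvT t σ lvl x = .inr (down true true (lvl x)) := by
  simp [ladderMap, hx, ht]

theorem ladderMap_cases (x : V) :
    (x ∈ lvT ∧ ladderMap lvT t σ lvl x = .inl (leaf (σ x))) ∨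
    ladderMap lvT t σ lvl x = .inl (rail true (lvl x).castSucc) ∨
    ladderMap lvT t σ lvl x = .inr (down true true (lvl x)) := by
  by_cases hx : x ∈ lvT
  · exact .inl ⟨hx, ladderMap_of_mem hx⟩
  · cases ht : t x
    · exact .inr (.inl (ladderMap_of_spec hx ht))
    · exact .inr (.inr (ladderMap_of_dupl hx ht))

theorem reach_hybrid_hpt_ladderMap (c : Bool) {k : Fin n} {x : V} (h : (k : ℕ) + 2 ≤ lvl x) :
    (ladder S n).Reach (hybrid c k) ((ladder S n).hpt (ladderMap lvT t σ lvl x)) := by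
  rcases ladderMap_cases (t := t) (σ := σ) x with ⟨-, hμ⟩ | hμ | hμ <;> rw [hμ]
  · exact reach_hybrid_leaf c k (σ x)
  · exact reach_hybrid_rail c true (by simpa)
  · exact reach_hybrid_hybrid c true (by omega)

theorem vlt_rail_of_reach_hybrid {b c : Bool} {k : Fin n} {v : LadderVertex S n}
    (h : (ladder S n).Reach (hybrid c k) v) : (ladder S n).vlt v (rail b k.castSucc) :=
  vlt_of_transGen acyclic (.head' (adj (down b c k)) h)

theorem ladderMap_slt_of_vlt (hT : IsGeneTree T lvT ρT σ)
    (hlvl : ∀ x y, T.vlt x y → (lvl y : ℕ) + 2 ≤ lvl x) {x y : V} (h : T.vlt x y) :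
    (ladder S n).slt (ladderMap lvT t σ lvl x) (ladderMap lvT t σ lvl y) := by
  have hy := hT.not_mem_of_vlt h
  have hxy := hlvl x y h
  have hle : (lvl y).castSucc ≤ (lvl x).castSucc := Fin.castSucc_le_castSucc_iff.2 (by omega)
  rcases ladderMap_cases (t := t) (σ := σ) y with ⟨hy', -⟩ | hμy | hμy
  · exact absurd hy' hy
  all_goals
    rcases ladderMap_cases (t := t) (σ := σ) x with ⟨-, hμx⟩ | hμx | hμx <;> rw [hμx, hμy]
  · exact vlt_rail_of_reach_hybrid (reach_hybrid_leaf true _ _)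
  · exact vlt_rail_of_reach_hybrid (reach_hybrid_rail true true (by simpa))
  · exact reach_rail_rail true hle
  · exact reach_hybrid_leaf true _ _
  · exact reach_hybrid_rail true true (by simpa)
  · exact ⟨vlt_head_tail acyclic _, reach_hybrid_rail true true (by simpa),
      vlt_head_tail acyclic _⟩

theorem isTreeNetRecon_ladderMap (hT : IsGeneTree T lvT ρT σ)
    (hlvl : ∀ x y, T.vlt x y → (lvl y : ℕ) + 2 ≤ lvl x) :
    IsTreeNetRecon T lvT t σ (ladder S n) leaf (ladderMap lvT t σ lvl) where
  R1 _ hx := ladderMap_of_mem hx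
  R2i x hx ht := by
    obtain ⟨c, hc⟩ := hT.exists_adj hx
    have hlc := hlvl c x (vlt_of_adj hT.acyclic hc)
    exact ⟨_, ladderMap_of_spec hx ht, c, c, hc, hc, hybrid true (lvl x), hybrid false (lvl x),
      by simp, adj (down true true _), adj (down true false _),
      reach_hybrid_hpt_ladderMap true hlc, reach_hybrid_hpt_ladderMap false hlc⟩
  R2ii _ hx ht := ⟨_, ladderMap_of_dupl hx ht⟩
  R3d _ _ h _ _ _ _ := .inr (ladderMap_slt_of_vlt hT hlvl h)
  R3s _ _ h _ := ladderMap_slt_of_vlt hT hlvl h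

end Reconciliation

/-- For every event-labeled gene tree `(T;t,σ)` there exists a
    species network for `(T;t,σ)`, i.e. a network `N` on `𝕊` together with a
    TreeNet-reconciliation map from `(T;t,σ)` to `N`. -/
theorem exists_species_network {V E S : Type}
    (T : MGraph V E) (lvT : Set V) (ρT : V) (t : V → Event) (σ : V → S)
    (hT : IsGeneTree T lvT ρT σ) :
    ∃ (W F : Type) (N : MGraph W F) (lvN : Set W) (ρN : W) (sp : S → W)
      (μ : V → W ⊕ F),
      IsNetwork N lvN ρN ∧ IsLeafLabeling N lvN sp ∧
        IsTreeNetRecon T lvT t σ N sp μ := by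
  have := hT.finV
  have := hT.finite_species
  obtain ⟨g₁, g₂, -, -, hg⟩ := hT.sigma_nontriv
  let lvl (x : V) : Fin (2 * Nat.card V) := ⟨2 * T.depth x, by have := T.depth_lt_card x; omega⟩
  have hlvl (x y : V) (h : T.vlt x y) : (lvl y : ℕ) + 2 ≤ lvl x := by
    have := MGraph.depth_lt_depth hT.acyclic h
    simp only [lvl]
    omega
  exact ⟨_, _, ladder S _, _, _, _, _, Ladder.isNetwork hg, Ladder.isLeafLabeling,
    isTreeNetRecon_ladderMap hT hlvl⟩

end Phylo
end

section
/- Suppose (T;t,σ) is an event-labeled gene tree and N is a multi-arc free network on 𝕊. Then N is a species network for (T;t,σ) (i.e., there exists a TreeNet-reconciliation map from (T;t,σ) to N) if and only if (U*(N),χ*) is a pseudo MUL-tree for (T;t,σ) (i.e., there exists a MUL-reconciliation map from (T;t,σ) to (U*(N),χ*)). -/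
/-!
Folding `U*(N)` back onto `N` (a root path goes to its last vertex, a path-arc to its last arc) is
a graph morphism into an acyclic graph, so it preserves `≺` and `⪯`: composed with it, a
MUL-reconciliation map becomes a TreeNet-reconciliation map. The two incomparable arcs of (M2.i)
leave the same root path, so they fold to distinct arcs with a common tail, and since `N` is
multi-arc free their heads are the two distinct children required by `Q_N`.

Conversely, a TreeNet-reconciliation map `μ` is lifted to `U*(N)` top-down along `T`: each vertex
`x` goes to a root path or path-arc lying over `μ x` below the lift of its parent, which exists
because every vertex of `N` is reachable from the root. At a speciation vertex `y`, `μ y ∈ Q_N`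
yields two children reached from `μ y` through different arcs; routing their lifts through the
matching arcs of `U*(N)` separates them, since sibling arcs of a tree are incomparable. (M0) holds
because a root path has as many children in `U*(N)` as its last vertex has in `N`.
-/

namespace Phylo

variable {V E W F D U S : Type}

/-- `(M, lv, ρ, χ)` is a pseudo MUL-tree on the species set `S`:
    a rooted tree (possibly with indegree-1 outdegree-1 vertices) whose root has
    indegree 0 and outdegree 1, together with a labeling `χ` of the leaves by `S`
    with pairwise disjoint nonempty classes covering all leaves. -/
structure IsPMULTree (M : MGraph D U) (lv : Set D) (ρ : D) (χ : S → Set D) : Prop where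
  finD : Finite D
  finU : Finite U
  acyclic : M.Acyclic
  root_in : M.inDeg ρ = 0
  root_out : M.outDeg ρ = 1
  leaf_iff : ∀ v : D, v ∈ lv ↔ (M.outDeg v = 0 ∧ M.inDeg v = 1)
  inner_deg : ∀ v : D, v ∉ lv → v ≠ ρ → M.inDeg v = 1 ∧ 1 ≤ M.outDeg v
  chi_sub : ∀ x : S, χ x ⊆ lv
  chi_ne : ∀ x : S, (χ x).Nonempty
  chi_disj : ∀ x y : S, x ≠ y → Disjoint (χ x) (χ y)
  chi_cover : ∀ l ∈ lv, ∃ x : S, l ∈ χ x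
  species_nontriv : ∃ x y : S, x ≠ y

/-- A MUL-tree is a pseudo MUL-tree whose underlying tree is a phylogenetic tree,
    i.e., without indegree-1 outdegree-1 vertices. -/
def IsMULTree (M : MGraph D U) (lv : Set D) (ρ : D) (χ : S → Set D) : Prop :=
  IsPMULTree M lv ρ χ ∧ ∀ v : D, v ∉ lv → v ≠ ρ → 2 ≤ M.outDeg v

/-- `D¹`: the set of vertices with indegree one and outdegree one. -/
def D1set (M : MGraph D U) : Set D := {v | M.inDeg v = 1 ∧ M.outDeg v = 1}

/-- A MUL-reconciliation map `κ : V → (D∖D¹) ∪ U` from the event-labeled gene tree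
    `(T;t,σ)` to the pseudo MUL-tree `(M,χ)`:
    (M1) each leaf maps to a leaf of `M` labeled by its species;
    (M2.i) a speciation vertex maps to an inner vertex of `M` admitting directed
    paths to the images of two distinct children whose first arcs are incomparable;
    (M2.ii) a duplication vertex maps to an arc;
    (M3) ancestor relations are preserved (strictly, unless both are duplications). -/
structure IsMULRecon (T : MGraph V E) (lvT : Set V) (t : V → Event) (σ : V → S)
    (M : MGraph D U) (lvM : Set D) (χ : S → Set D) (κ : V → D ⊕ U) : Prop where
  M0 : ∀ (x : V) (d : D), κ x = Sum.inl d → d ∉ D1set M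
  M1 : ∀ x ∈ lvT, ∃ d : D, κ x = Sum.inl d ∧ d ∈ lvM ∧ d ∈ χ (σ x)
  M2i : ∀ x : V, x ∉ lvT → t x = Event.spec →
      ∃ d : D, κ x = Sum.inl d ∧ d ∉ lvM ∧
        ∃ c₁ c₂ : V, T.Adj x c₁ ∧ T.Adj x c₂ ∧ c₁ ≠ c₂ ∧
          ∃ a₁ a₂ : U, M.tail a₁ = d ∧ M.tail a₂ = d ∧
            M.Reach (M.head a₁) (M.hpt (κ c₁)) ∧
            M.Reach (M.head a₂) (M.hpt (κ c₂)) ∧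
            ¬ M.sle (Sum.inr a₁) (Sum.inr a₂) ∧ ¬ M.sle (Sum.inr a₂) (Sum.inr a₁)
  M2ii : ∀ x : V, x ∉ lvT → t x = Event.dupl → ∃ a : U, κ x = Sum.inr a
  M3d : ∀ x y : V, T.vlt x y → x ∉ lvT → y ∉ lvT →
      t x = Event.dupl → t y = Event.dupl → M.sle (κ x) (κ y)
  M3s : ∀ x y : V, T.vlt x y →
      ¬ (x ∉ lvT ∧ y ∉ lvT ∧ t x = Event.dupl ∧ t y = Event.dupl) →
      M.slt (κ x) (κ y)

/-- Vertices of the unfolding `U*(N)`: directed paths of `N` starting at the root. -/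
def RootPath (N : MGraph W F) (ρ : W) : Type :=
  {p : List W // N.IsDiPath p ∧ p.head? = some ρ}

/-- Arcs of the unfolding `U*(N)`: pairs `(P, a)` of a root path `P` and an arc `a`
    of `N` such that `P a` is again a root path. -/
def RootPathArc (N : MGraph W F) (ρ : W) : Type :=
  {pa : List W × F //
    (N.IsDiPath pa.1 ∧ pa.1.head? = some ρ) ∧
    pa.1.getLast? = some (N.tail pa.2) ∧
    (N.IsDiPath (pa.1 ++ [N.head pa.2]) ∧
      (pa.1 ++ [N.head pa.2]).head? = some ρ)}

/-- The unfolding `U*(N)` of a network `N` with root `ρ`: the pseudo MUL-tree whose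
    vertices are the directed paths of `N` starting at the root, with an arc from
    `P` to `P'` iff `P' = P a` for some arc `a` of `N`. -/
def unfoldGraph (N : MGraph W F) (ρ : W) :
    MGraph (RootPath N ρ) (RootPathArc N ρ) where
  tail a := ⟨a.1.1, a.2.1⟩
  head a := ⟨a.1.1 ++ [N.head a.1.2], a.2.2.2⟩

/-- Leaves of `U*(N)`: the root paths ending in a leaf of `N`. -/
def unfoldLeaves (N : MGraph W F) (ρ : W) (lv : Set W) : Set (RootPath N ρ) :=
  {P | ∃ l ∈ lv, P.1.getLast? = some l}

/-- The labeling `χ*` of `U*(N)`: `χ* x` consists of the root paths ending in the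
    leaf labeled `x`. -/
def chiStar (N : MGraph W F) (ρ : W) (sp : S → W) : S → Set (RootPath N ρ) :=
  fun x => {P | P.1.getLast? = some (sp x)}


namespace MGraph

variable {V' E' : Type} {G : MGraph V E}

theorem transGen_of_reach_of_ne {u v : V} (h : G.Reach u v) (hne : u ≠ v) :
    Relation.TransGen G.Adj u v :=
  (Relation.reflTransGen_iff_eq_or_transGen.mp h).resolve_left hne.symm

theorem exists_arc_tail_eq_of_reach {u v : V} (h : G.Reach u v) (hne : u ≠ v) :
    ∃ e, G.tail e = u ∧ G.Reach (G.head e) v := by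
  obtain ⟨c, ⟨e, rfl, rfl⟩, hcv⟩ := Relation.TransGen.head'_iff.mp (transGen_of_reach_of_ne h hne)
  exact ⟨e, rfl, hcv⟩

theorem exists_arc_head_eq_of_reach {u v : V} (h : G.Reach u v) (hne : u ≠ v) :
    ∃ e, G.head e = v ∧ G.Reach u (G.tail e) := by
  obtain ⟨c, huc, ⟨e, rfl, rfl⟩⟩ := Relation.TransGen.tail'_iff.mp (transGen_of_reach_of_ne h hne)
  exact ⟨e, rfl, huc⟩

theorem reach_getLast_of_isChain {p : List V} (hp : p.IsChain G.Adj) (hne : p ≠ [])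
    {w : V} (hw : w ∈ p) : G.Reach w (p.getLast hne) :=
  hp.backwards_induction (G.Reach · (p.getLast hne)) p (fun _ _ h hr => hr.head h)
    (fun _ => Relation.ReflTransGen.refl) w hw

theorem slt_inl_of_reach {a : V ⊕ E} {y : V} (h : G.Reach y (G.tpt a)) (hne : a ≠ .inl y) :
    G.slt a (.inl y) := by
  rcases a with x | f
  exacts [⟨h, fun hxy => hne (congrArg Sum.inl hxy)⟩, h]

theorem outDeg_ne_zero [Finite E] {e : E} {v : V} (he : G.tail e = v) : G.outDeg v ≠ 0 :=
  Nat.card_ne_zero.mpr ⟨⟨⟨e, he⟩⟩, inferInstance⟩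

theorem inDeg_ne_zero [Finite E] {e : E} {v : V} (he : G.head e = v) : G.inDeg v ≠ 0 :=
  Nat.card_ne_zero.mpr ⟨⟨⟨e, he⟩⟩, inferInstance⟩

theorem outDeg_ne_one {e f : E} {v : V} (he : G.tail e = v) (hf : G.tail f = v) (hef : e ≠ f) :
    G.outDeg v ≠ 1 := fun h =>
  hef (congrArg Subtype.val ((Nat.card_eq_one_iff_unique.mp h).1.elim ⟨e, he⟩ ⟨f, hf⟩))

theorem eq_of_inDeg_eq_one {e f : E} {v : V} (h : G.inDeg v = 1) (he : G.head e = v)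
    (hf : G.head f = v) : e = f :=
  congrArg Subtype.val ((Nat.card_eq_one_iff_unique.mp h).1.elim ⟨e, he⟩ ⟨f, hf⟩)

theorem exists_ne_of_two_le_outDeg [Finite E] {v : V} (h : 2 ≤ G.outDeg v) :
    ∃ e f, G.tail e = v ∧ G.tail f = v ∧ e ≠ f := by
  obtain ⟨⟨e, he⟩, ⟨f, hf⟩, hef⟩ := (Finite.one_lt_card_iff_nontrivial.mp h).exists_pair_ne
  exact ⟨e, f, he, hf, fun h => hef (Subtype.ext h)⟩

namespace Acyclic

theorem ne_of_adj (hG : G.Acyclic) {u v : V} (h : G.Adj u v) : u ≠ v := by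
  rintro rfl
  exact hG u (.single h)

theorem eq_of_reach_of_reach (hG : G.Acyclic) {u v : V} (huv : G.Reach u v)
    (hvu : G.Reach v u) : u = v := by
  by_contra hne
  exact hG u ((transGen_of_reach_of_ne huv hne).trans_left hvu)

theorem vlt_head_tail (hG : G.Acyclic) (e : E) : G.vlt (G.head e) (G.tail e) :=
  ⟨.single ⟨e, rfl, rfl⟩, (hG.ne_of_adj ⟨e, rfl, rfl⟩).symm⟩

theorem vlt_trans (hG : G.Acyclic) {u v w : V} (huv : G.vlt u v) (hvw : G.vlt v w) : G.vlt u w :=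
  ⟨hvw.1.trans huv.1, fun h => by subst h; exact huv.2 (hG.eq_of_reach_of_reach hvw.1 huv.1)⟩

theorem slt_trans (hG : G.Acyclic) {a b c : V ⊕ E} (hab : G.slt a b) (hbc : G.slt b c) :
    G.slt a c := by
  rcases a with x | e <;> rcases b with y | f <;> rcases c with z | g <;>
    simp only [slt, vle] at hab hbc ⊢
  · exact hG.vlt_trans hab hbc
  · exact hbc.trans hab.1
  · refine ⟨(hbc.trans (hG.vlt_head_tail f).1).trans hab, fun hxz => ?_⟩
    subst hxz
    exact (hG.vlt_head_tail f).2 (hG.eq_of_reach_of_reach (hab.trans hbc) (hG.vlt_head_tail f).1)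
  · exact (hbc.2.1.trans (hG.vlt_head_tail f).1).trans hab
  · exact hbc.1.trans hab
  · exact ⟨hG.vlt_head_tail e, hbc.trans hab, hG.vlt_head_tail g⟩
  · exact (hbc.trans (hG.vlt_head_tail f).1).trans hab.2.1
  · exact ⟨hab.1, (hbc.2.1.trans (hG.vlt_head_tail f).1).trans hab.2.1, hbc.2.2⟩

theorem sle_trans (hG : G.Acyclic) {a b c : V ⊕ E} (hab : G.sle a b) (hbc : G.sle b c) :
    G.sle a c := by
  rcases hab with rfl | hab
  · exact hbc
  rcases hbc with rfl | hbc
  · exact .inr hab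
  · exact .inr (hG.slt_trans hab hbc)

theorem slt_of_slt_of_sle (hG : G.Acyclic) {a b c : V ⊕ E} (hab : G.slt a b) (hbc : G.sle b c) :
    G.slt a c := by
  rcases hbc with rfl | hbc
  exacts [hab, hG.slt_trans hab hbc]

theorem slt_of_sle_of_slt (hG : G.Acyclic) {a b c : V ⊕ E} (hab : G.sle a b) (hbc : G.slt b c) :
    G.slt a c := by
  rcases hab with rfl | hab
  exacts [hbc, hG.slt_trans hab hbc]

theorem not_slt_of_tail_eq (hG : G.Acyclic) {e f : E} (h : G.tail e = G.tail f) :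
    ¬ G.slt (.inr e) (.inr f) := fun ⟨_, hef, hf⟩ =>
  hf.2 (hG.eq_of_reach_of_reach (by rw [← h]; exact hef) hf.1)

theorem slt_inr_of_reach (hG : G.Acyclic) {a : V ⊕ E} {e : E} (h : G.Reach (G.head e) (G.tpt a)) :
    G.slt a (.inr e) := by
  rcases a with x | f
  exacts [h, ⟨hG.vlt_head_tail f, h, hG.vlt_head_tail e⟩]

theorem exists_arc_of_slt_inl (hG : G.Acyclic) {a : V ⊕ E} {w : V} (h : G.slt a (.inl w)) :
    ∃ e, G.tail e = w ∧ G.Reach (G.head e) (G.hpt a) := by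
  refine exists_arc_tail_eq_of_reach ?_ ?_
  · rcases a with x | f
    exacts [h.1, h.tail ⟨f, rfl, rfl⟩]
  · rcases a with x | f
    · exact h.2.symm
    · rintro (rfl : w = G.head f)
      exact (hG.vlt_head_tail f).2 (hG.eq_of_reach_of_reach h (hG.vlt_head_tail f).1)

theorem sle_and_slt_of_transGen (hG : G.Acyclic) {α : Type*} {r : α → α → Prop}
    {κ : α → V ⊕ E} {p : α → Prop}
    (h : ∀ y x, r y x → G.sle (κ x) (κ y) ∧ (¬ (p x ∧ p y) → G.slt (κ x) (κ y)))
    {y x : α} (hyx : Relation.TransGen r y x) :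
    G.sle (κ x) (κ y) ∧ (¬ (p x ∧ p y) → G.slt (κ x) (κ y)) := by
  induction hyx with
  | single hyx => exact h _ _ hyx
  | @tail z x _ hzx ih =>
    obtain ⟨hle, hlt⟩ := h z x hzx
    refine ⟨hG.sle_trans hle ih.1, fun hxy => ?_⟩
    by_cases hx : p x
    · exact hG.slt_of_sle_of_slt hle (ih.2 fun hzy => hxy ⟨hx, hzy.2⟩)
    · exact hG.slt_of_slt_of_sle (hlt fun hxz => hx hxz.1) ih.1

theorem wellFounded_adj [Finite V] (hG : G.Acyclic) : WellFounded G.Adj := by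
  have : IsTrans V (Relation.TransGen G.Adj) := ⟨fun _ _ _ => .trans⟩
  have : Std.Irrefl (Relation.TransGen G.Adj) := ⟨hG⟩
  exact Subrelation.wf (fun h => Relation.TransGen.single h)
    (Finite.wellFounded_of_trans_of_irrefl _)

end Acyclic

structure Hom (G : MGraph V E) (H : MGraph V' E') where
  onV : V → V'
  onE : E → E'
  tail_onE : ∀ e, H.tail (onE e) = onV (G.tail e)
  head_onE : ∀ e, H.head (onE e) = onV (G.head e)

namespace Hom

variable {H : MGraph V' E'} (φ : Hom G H)

def onPt : V ⊕ E → V' ⊕ E' := Sum.map φ.onV φ.onE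

theorem hpt_onPt (a : V ⊕ E) : H.hpt (φ.onPt a) = φ.onV (G.hpt a) := by
  rcases a with v | e
  exacts [rfl, φ.head_onE e]

theorem adj {u v : V} (h : G.Adj u v) : H.Adj (φ.onV u) (φ.onV v) := by
  obtain ⟨e, rfl, rfl⟩ := h
  exact ⟨φ.onE e, φ.tail_onE e, φ.head_onE e⟩

theorem reach {u v : V} (h : G.Reach u v) : H.Reach (φ.onV u) (φ.onV v) :=
  h.lift φ.onV fun _ _ => φ.adj

theorem vlt (hH : H.Acyclic) {u v : V} (h : G.vlt u v) : H.vlt (φ.onV u) (φ.onV v) := by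
  refine ⟨φ.reach h.1, fun huv => hH (φ.onV v) ?_⟩
  have : Relation.TransGen H.Adj (φ.onV v) (φ.onV u) :=
    (transGen_of_reach_of_ne h.1 h.2.symm).lift φ.onV fun _ _ => φ.adj
  rwa [huv] at this

theorem slt (hH : H.Acyclic) {a b : V ⊕ E} (h : G.slt a b) : H.slt (φ.onPt a) (φ.onPt b) := by
  rcases a with x | e <;> rcases b with y | f <;>
    simp only [onPt, Sum.map_inl, Sum.map_inr, MGraph.slt, vle, φ.tail_onE, φ.head_onE] at h ⊢
  · exact φ.vlt hH h
  · exact φ.reach h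
  · exact φ.reach h
  · refine ⟨?_, φ.reach h.2.1, ?_⟩ <;>
      simpa only [φ.tail_onE, φ.head_onE] using hH.vlt_head_tail (φ.onE _)

theorem sle (hH : H.Acyclic) {a b : V ⊕ E} (h : G.sle a b) : H.sle (φ.onPt a) (φ.onPt b) :=
  h.imp (congrArg φ.onPt) (φ.slt hH)

end Hom

end MGraph

theorem exists_selection_ne {ι α : Type*} {s : Set ι} {A : ι → α → Prop} (hs : s.Nontrivial)
    (hA : ∀ i ∈ s, ∃ a, A i a) (h : ∃ i ∈ s, ∃ j ∈ s, ∃ a b, A i a ∧ A j b ∧ a ≠ b) :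
    ∃ f : ι → α, (∀ i ∈ s, A i (f i)) ∧ ∃ i ∈ s, ∃ j ∈ s, f i ≠ f j := by
  classical
  have : Nonempty α := let ⟨_, _, _, _, a, _⟩ := h; ⟨a⟩
  choose! f hf using hA
  by_cases hconst : ∀ i ∈ s, ∀ j ∈ s, f i = f j
  swap
  · push Not at hconst
    exact ⟨f, hf, hconst⟩
  -- `f` is constant on `s`, so one of the two distinct admissible values differs from it
  obtain ⟨k, hk, c, hc, hck⟩ : ∃ k ∈ s, ∃ c, A k c ∧ c ≠ f k := by
    obtain ⟨i, hi, j, hj, a, b, ha, hb, hab⟩ := h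
    by_cases hai : a = f i
    · exact ⟨j, hj, b, hb, fun hbj => hab (hai.trans ((hconst i hi j hj).trans hbj.symm))⟩
    · exact ⟨i, hi, a, ha, hai⟩
  obtain ⟨l, hl, hlk⟩ := hs.exists_ne k
  refine ⟨Function.update f k c, fun i hi => ?_, k, hk, l, hl, ?_⟩
  · by_cases hik : i = k
    · subst hik
      rwa [Function.update_self]
    · rw [Function.update_of_ne hik]
      exact hf i hi
  · rw [Function.update_self, Function.update_of_ne hlk, ← hconst k hk l hl]
    exact hck

theorem _root_.WellFounded.exists_forall_of_unique_pred {α β : Type*} {r : α → α → Prop}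
    (hwf : WellFounded r) (hpred : ∀ {x y z}, r y x → r z x → y = z) (P : α → β → Prop)
    (R : α → α → β → β → Prop) (hP : ∀ x, ∃ b, P x b)
    (hR : ∀ {y x b}, r y x → P y b → ∃ b', P x b' ∧ R y x b b') :
    ∃ f : α → β, (∀ x, P x (f x)) ∧ ∀ y x, r y x → R y x (f y) (f x) := by
  classical
  let f : ∀ x, {b // P x b} := hwf.fix fun x ih =>
    if h : ∃ y, r y x then
      ⟨(hR h.choose_spec (ih _ h.choose_spec).2).choose,
        (hR h.choose_spec (ih _ h.choose_spec).2).choose_spec.1⟩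
    else ⟨(hP x).choose, (hP x).choose_spec⟩
  refine ⟨fun x => (f x).1, fun x => (f x).2, fun y x hyx => ?_⟩
  have hex : ∃ y, r y x := ⟨y, hyx⟩
  have key : R hex.choose x (f hex.choose).1 (f x).1 := by
    rw [show f x = _ from hwf.fix_eq _ x, dif_pos hex]
    exact (hR hex.choose_spec (f _).2).choose_spec.2
  rwa [hpred hex.choose_spec hyx] at key

theorem IsNetwork.root_reach {N : MGraph W F} {lvN : Set W} {ρ : W} (hN : IsNetwork N lvN ρ)
    (v : W) : N.Reach ρ v := by
  have := hN.finV
  induction v using hN.acyclic.wellFounded_adj.induction with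
  | _ v ih =>
    by_cases hv : v = ρ
    · exact hv ▸ .refl
    have hdeg : N.inDeg v ≠ 0 := by
      by_cases hlv : v ∈ lvN
      · rw [((hN.leaf_iff v).mp hlv).2]; omega
      · rcases hN.inner_deg v hlv hv with ⟨h, -⟩ | ⟨h, -⟩ <;> omega
    obtain ⟨⟨e, he⟩⟩ := (Nat.card_ne_zero.mp hdeg).1
    exact (ih _ ⟨e, rfl, he⟩).tail ⟨e, rfl, he⟩

namespace IsGeneTree

variable {T : MGraph V E} {lvT : Set V} {ρT : V} {σ : V → S}

theorem notMem_of_adj (hT : IsGeneTree T lvT ρT σ) {y x : V} (h : T.Adj y x) : y ∉ lvT := by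
  have := hT.finE
  obtain ⟨e, he, -⟩ := h
  exact fun hy => MGraph.outDeg_ne_zero he ((hT.leaf_iff y).mp hy).1

theorem vlt_of_adj (hT : IsGeneTree T lvT ρT σ) {y x : V} (h : T.Adj y x) : T.vlt x y :=
  ⟨.single h, (hT.acyclic.ne_of_adj h).symm⟩

theorem eq_of_adj_of_adj (hT : IsGeneTree T lvT ρT σ) {x y z : V} (hy : T.Adj y x)
    (hz : T.Adj z x) : y = z := by
  have := hT.finE
  obtain ⟨e, rfl, rfl⟩ := hy
  obtain ⟨f, rfl, hf⟩ := hz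
  have hroot : T.head e ≠ ρT := fun h => MGraph.inDeg_ne_zero h hT.root_in
  have hdeg : T.inDeg (T.head e) = 1 := by
    by_cases hleaf : T.head e ∈ lvT
    · exact ((hT.leaf_iff _).mp hleaf).2
    · exact (hT.inner_deg _ hleaf hroot).1
  rw [MGraph.eq_of_inDeg_eq_one hdeg rfl hf]

theorem children_nontrivial (hT : IsGeneTree T lvT ρT σ) {y : V} (hy : y ∉ lvT) :
    {c | T.Adj y c}.Nontrivial := by
  have := hT.finE
  have hdeg : 2 ≤ T.outDeg y := by
    by_cases hroot : y = ρT
    · exact hroot ▸ hT.root_out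
    · exact (hT.inner_deg y hy hroot).2
  obtain ⟨e, f, he, hf, hef⟩ := MGraph.exists_ne_of_two_le_outDeg hdeg
  exact ⟨T.head e, ⟨e, he, rfl⟩, T.head f, ⟨f, hf, rfl⟩,
    fun h => hef (hT.multiarc_free e f (he.trans hf.symm) h)⟩

end IsGeneTree

section Unfolding

variable {N : MGraph W F} {ρ : W}

namespace RootPath

def last (P : RootPath N ρ) : W := P.1.getLast P.2.1.1

theorem getLast?_eq (P : RootPath N ρ) : P.1.getLast? = some P.last :=
  List.getLast?_eq_some_getLast _

theorem last_eq_iff {P : RootPath N ρ} {w : W} : P.last = w ↔ P.1.getLast? = some w := by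
  rw [getLast?_eq, Option.some_inj]

theorem reach_last (P : RootPath N ρ) {w : W} (hw : w ∈ P.1) : N.Reach w P.last :=
  MGraph.reach_getLast_of_isChain P.2.1.2.1 _ hw

def root (N : MGraph W F) (ρ : W) : RootPath N ρ :=
  ⟨[ρ], ⟨List.cons_ne_nil _ _, List.isChain_singleton _, List.nodup_singleton _⟩, rfl⟩

def arc (hN : N.Acyclic) (P : RootPath N ρ) (f : F) (hf : N.tail f = P.last) :
    RootPathArc N ρ := by
  refine ⟨(P.1, f), P.2, hf ▸ P.getLast?_eq, ⟨List.concat_ne_nil _ _, ?_, ?_⟩, ?_⟩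
  · refine List.isChain_append.mpr ⟨P.2.1.2.1, List.isChain_singleton _, ?_⟩
    simp only [P.getLast?_eq, Option.mem_def, Option.some.injEq, List.head?_cons]
    rintro _ rfl _ rfl
    exact ⟨f, hf, rfl⟩
  · refine List.nodup_append.mpr ⟨P.2.1.2.2, List.nodup_singleton _, ?_⟩
    rintro w hw _ hf' rfl
    rw [List.mem_singleton.mp hf'] at hw
    have hreach : N.Reach (N.head f) (N.tail f) := hf ▸ P.reach_last hw
    exact (hN.vlt_head_tail f).2 (hN.eq_of_reach_of_reach hreach (hN.vlt_head_tail f).1)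
  · rw [List.head?_append_of_ne_nil _ P.2.1.1]
    exact P.2.2

theorem exists_extend (hN : N.Acyclic) (P : RootPath N ρ) {v : W} (h : N.Reach P.last v) :
    ∃ Q : RootPath N ρ, P.1 <+: Q.1 ∧ Q.last = v := by
  induction h with
  | refl => exact ⟨P, List.prefix_refl _, rfl⟩
  | tail _ hadj ih =>
    obtain ⟨Q, hPQ, rfl⟩ := ih
    obtain ⟨f, hf, rfl⟩ := hadj
    exact ⟨⟨Q.1 ++ [N.head f], (Q.arc hN f hf).2.2.2⟩, hPQ.trans (List.prefix_append _ _),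
      List.getLast_append_singleton _⟩

theorem exists_arc_of_two_le_length (Q : RootPath N ρ) (hQ : 2 ≤ Q.1.length) :
    ∃ a : RootPathArc N ρ, (unfoldGraph N ρ).head a = Q := by
  obtain ⟨q, hq⟩ := Q
  obtain ⟨l, x, rfl⟩ := (List.eq_nil_or_concat' q).resolve_left (by rintro rfl; simp at hQ)
  have hl : l ≠ [] := by rintro rfl; simp at hQ
  have hchain := List.isChain_append.mp hq.1.2.1
  obtain ⟨f, hf, rfl⟩ := hchain.2.2 _ (List.getLast?_eq_some_getLast hl) _ rfl
  have hnodup := (List.nodup_append.mp hq.1.2.2).1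
  refine ⟨⟨(l, f), ⟨⟨hl, hchain.1, hnodup⟩, ?_⟩, hf ▸ List.getLast?_eq_some_getLast hl, hq⟩, rfl⟩
  rw [← hq.2, List.head?_append_of_ne_nil _ hl]

end RootPath

theorem RootPathArc.ext_of_tail {a b : RootPathArc N ρ}
    (htail : (unfoldGraph N ρ).tail a = (unfoldGraph N ρ).tail b) (harc : a.1.2 = b.1.2) : a = b :=
  Subtype.ext (Prod.ext (congrArg Subtype.val htail) harc)

theorem unfoldGraph_head_val (a : RootPathArc N ρ) :
    ((unfoldGraph N ρ).head a).1 = ((unfoldGraph N ρ).tail a).1 ++ [N.head a.1.2] := rfl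

theorem last_unfoldGraph_tail (a : RootPathArc N ρ) :
    ((unfoldGraph N ρ).tail a).last = N.tail a.1.2 :=
  RootPath.last_eq_iff.mpr a.2.2.1

theorem last_unfoldGraph_head (a : RootPathArc N ρ) :
    ((unfoldGraph N ρ).head a).last = N.head a.1.2 :=
  List.getLast_append_singleton _

theorem unfoldGraph_reach_iff {P Q : RootPath N ρ} : (unfoldGraph N ρ).Reach P Q ↔ P.1 <+: Q.1 := by
  refine ⟨fun h => ?_, fun h => ?_⟩
  · induction h with
    | refl => exact List.prefix_refl _
    | tail _ hadj ih =>
      obtain ⟨a, rfl, rfl⟩ := hadj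
      exact ih.trans (List.prefix_append _ _)
  · induction hn : Q.1.length - P.1.length generalizing Q with
    | zero =>
      have hPQ : P = Q := Subtype.ext (h.eq_of_length (by have := h.length_le; omega))
      exact hPQ ▸ .refl
    | succ n ih =>
      have hP := List.length_pos_iff.mpr P.2.1.1
      obtain ⟨a, rfl⟩ := Q.exists_arc_of_two_le_length (by omega)
      have hlen : ((unfoldGraph N ρ).head a).1.length = ((unfoldGraph N ρ).tail a).1.length + 1 :=
        by rw [unfoldGraph_head_val, List.length_append, List.length_singleton]
      have hPa : P.1 <+: ((unfoldGraph N ρ).tail a).1 :=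
        List.prefix_of_prefix_length_le h (List.prefix_append _ _) (by omega)
      exact .tail (ih hPa (by omega)) ⟨a, rfl, rfl⟩

theorem unfoldGraph_vlt_iff {P Q : RootPath N ρ} :
    (unfoldGraph N ρ).vlt P Q ↔ Q.1 <+: P.1 ∧ Q.1.length < P.1.length := by
  refine ⟨fun ⟨h, hne⟩ => ?_, fun ⟨h, hlen⟩ => ⟨unfoldGraph_reach_iff.mpr h, ?_⟩⟩
  · have h := unfoldGraph_reach_iff.mp h
    exact ⟨h, lt_of_le_of_ne h.length_le fun hlen => hne (Subtype.ext (h.eq_of_length hlen).symm)⟩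
  · rintro rfl
    exact lt_irrefl _ hlen

theorem unfoldGraph_acyclic : (unfoldGraph N ρ).Acyclic := by
  intro P h
  obtain ⟨Q, ⟨a, rfl, rfl⟩, hQP⟩ := Relation.TransGen.head'_iff.mp h
  have := (unfoldGraph_reach_iff.mp hQP).length_le
  rw [unfoldGraph_head_val, List.length_append, List.length_singleton] at this
  omega

theorem outDeg_unfoldGraph (hN : N.Acyclic) (P : RootPath N ρ) :
    (unfoldGraph N ρ).outDeg P = N.outDeg P.last := by
  refine Nat.card_congr
    { toFun := fun a => ⟨a.1.1.2, by obtain ⟨a, rfl⟩ := a; exact (last_unfoldGraph_tail a).symm⟩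
      invFun := fun f => ⟨P.arc hN f.1 f.2, rfl⟩
      left_inv := fun ⟨a, ha⟩ => ?_
      right_inv := fun _ => rfl }
  subst ha
  rfl

def fold : MGraph.Hom (unfoldGraph N ρ) N where
  onV := RootPath.last
  onE a := a.1.2
  tail_onE a := (last_unfoldGraph_tail a).symm
  head_onE a := (last_unfoldGraph_head a).symm

theorem IsMULRecon.isTreeNetRecon_fold {T : MGraph V E} {lvT : Set V} {t : V → Event}
    {σ : V → S} {lvN : Set W} {sp : S → W} {κ : V → RootPath N ρ ⊕ RootPathArc N ρ}
    (hN : N.Acyclic) (hmf : N.MultiArcFree)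
    (hκ : IsMULRecon T lvT t σ (unfoldGraph N ρ) (unfoldLeaves N ρ lvN) (chiStar N ρ sp) κ) :
    IsTreeNetRecon T lvT t σ N sp (fun x => fold.onPt (κ x)) where
  R1 x hx := by
    obtain ⟨d, hd, -, hdχ⟩ := hκ.M1 x hx
    rw [hd]
    exact congrArg Sum.inl (RootPath.last_eq_iff.mpr hdχ)
  R2i x hx hxs := by
    obtain ⟨d, hd, -, c₁, c₂, h₁, h₂, -, a₁, a₂, ht₁, ht₂, hr₁, hr₂, hns, -⟩ := hκ.M2i x hx hxs
    have hlast : ∀ a : RootPathArc N ρ, (unfoldGraph N ρ).tail a = d → N.tail a.1.2 = d.last :=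
      fun a ha => ha ▸ (last_unfoldGraph_tail a).symm
    have hz : N.head a₁.1.2 ≠ N.head a₂.1.2 := fun hz => hns <| .inl <| congrArg Sum.inr <|
      RootPathArc.ext_of_tail (ht₁.trans ht₂.symm)
        (hmf _ _ ((hlast a₁ ht₁).trans (hlast a₂ ht₂).symm) hz)
    refine ⟨d.last, by rw [hd]; rfl, c₁, c₂, h₁, h₂, _, _, hz,
      ⟨_, hlast a₁ ht₁, rfl⟩, ⟨_, hlast a₂ ht₂, rfl⟩, ?_, ?_⟩ <;>
      simp only [fold.hpt_onPt, ← last_unfoldGraph_head]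
    exacts [fold.reach hr₁, fold.reach hr₂]
  R2ii x hx hxd := by
    obtain ⟨a, ha⟩ := hκ.M2ii x hx hxd
    exact ⟨a.1.2, by rw [ha]; rfl⟩
  R3d x y hxy hx hy hxd hyd := fold.sle hN (hκ.M3d x y hxy hx hy hxd hyd)
  R3s x y hxy hnd := fold.slt hN (hκ.M3s x y hxy hnd)

/-- An arc of `U*(N)` lies over every arc of `N` with the same head: a route provided by `Q_N`
may enter the head of an arc through another arc. -/
def LiesOver : W ⊕ F → RootPath N ρ ⊕ RootPathArc N ρ → Prop
  | .inl w, .inl P => P.last = w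
  | .inr e, .inr a => N.head a.1.2 = N.head e
  | _, _ => False

namespace LiesOver

theorem eq_inl_last {m : W ⊕ F} {P : RootPath N ρ} (h : LiesOver m (.inl P)) :
    m = .inl P.last := by
  rcases m with w | e
  exacts [congrArg Sum.inl h.symm, h.elim]

theorem exists_inl {w : W} {q : RootPath N ρ ⊕ RootPathArc N ρ} (h : LiesOver (.inl w) q) :
    ∃ P, q = .inl P ∧ P.last = w := by
  rcases q with P | a
  exacts [⟨P, rfl, h⟩, h.elim]

theorem exists_inr {e : F} {q : RootPath N ρ ⊕ RootPathArc N ρ} (h : LiesOver (.inr e) q) :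
    ∃ a, q = .inr a := by
  rcases q with P | a
  exacts [h.elim, ⟨a, rfl⟩]

end LiesOver

theorem RootPath.exists_liesOver_of_reach_tpt (hN : N.Acyclic) (P : RootPath N ρ) {m : W ⊕ F}
    (h : N.Reach P.last (N.tpt m)) :
    ∃ q, LiesOver m q ∧ (unfoldGraph N ρ).Reach P ((unfoldGraph N ρ).tpt q) := by
  obtain ⟨Q, hPQ, hQ⟩ := P.exists_extend hN h
  rcases m with w | f
  · exact ⟨.inl Q, hQ, unfoldGraph_reach_iff.mpr hPQ⟩
  · exact ⟨.inr (Q.arc hN f hQ.symm), rfl, unfoldGraph_reach_iff.mpr hPQ⟩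

theorem exists_liesOver {lvN : Set W} (hN : IsNetwork N lvN ρ) (m : W ⊕ F) :
    ∃ q : RootPath N ρ ⊕ RootPathArc N ρ, LiesOver m q :=
  ((RootPath.root N ρ).exists_liesOver_of_reach_tpt hN.acyclic (hN.root_reach _)).imp
    fun _ h => h.1

theorem LiesOver.exists_slt (hN : N.Acyclic) {m₀ m : W ⊕ F}
    {q : RootPath N ρ ⊕ RootPathArc N ρ} (hq : LiesOver m₀ q) (h : N.slt m m₀) :
    ∃ q', LiesOver m q' ∧ (unfoldGraph N ρ).slt q' q := by
  rcases m₀ with y | e <;> rcases q with P | a <;> simp only [LiesOver] at hq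
  · have hr : N.Reach P.last (N.tpt m) := by
      rcases m with x | f
      exacts [hq ▸ h.1, hq ▸ h]
    obtain ⟨q', hq', hPq'⟩ := P.exists_liesOver_of_reach_tpt hN hr
    refine ⟨q', hq', MGraph.slt_inl_of_reach hPq' ?_⟩
    rintro rfl
    rcases m with x | f
    exacts [h.2 (hq' ▸ hq), hq']
  · have hr : N.Reach ((unfoldGraph N ρ).head a).last (N.tpt m) := by
      rw [last_unfoldGraph_head, hq]
      rcases m with x | f
      exacts [h, h.2.1]
    obtain ⟨q', hq', hq'a⟩ := ((unfoldGraph N ρ).head a).exists_liesOver_of_reach_tpt hN hr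
    exact ⟨q', hq', unfoldGraph_acyclic.slt_inr_of_reach hq'a⟩

theorem RootPath.exists_liesOver_of_reach_head (hN : N.Acyclic) (P : RootPath N ρ) {g : F}
    (hg : N.tail g = P.last) {m : W ⊕ F} (h : N.Reach (N.head g) (N.hpt m)) :
    ∃ q, LiesOver m q ∧ (P.1 ++ [N.head g]) <+: ((unfoldGraph N ρ).hpt q).1 ∧
      (unfoldGraph N ρ).slt q (.inl P) := by
  let A := P.arc hN g hg
  obtain ⟨Q, hAQ, hQ⟩ :=
    ((unfoldGraph N ρ).head A).exists_extend hN ((last_unfoldGraph_head A).symm ▸ h)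
  have hPQ : (unfoldGraph N ρ).vlt Q P := by
    have hlen : (P.1 ++ [N.head g]).length ≤ Q.1.length := hAQ.length_le
    rw [List.length_append, List.length_singleton] at hlen
    exact unfoldGraph_vlt_iff.mpr ⟨(List.prefix_append _ _).trans hAQ, by omega⟩
  rcases m with w | f
  · exact ⟨.inl Q, hQ, hAQ, hPQ⟩
  · obtain ⟨b, rfl, hPb⟩ := MGraph.exists_arc_head_eq_of_reach hPQ.1 hPQ.2.symm
    exact ⟨.inr b, (last_unfoldGraph_head b).symm.trans hQ, hAQ, hPb⟩

section Forward

variable {T : MGraph V E} {lvT : Set V} {ρT : V} {t : V → Event} {σ : V → S}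
  {lvN : Set W} {sp : S → W} {μ : V → W ⊕ F}

/-- `g c` is the arc of `N` along which the child `c` of the speciation vertex `y` leaves `μ y`;
two children leave along different arcs. -/
def IsGateMap (T : MGraph V E) (N : MGraph W F) (μ : V → W ⊕ F) (y : V) (g : V → F) : Prop :=
  (∀ c, T.Adj y c → N.tail (g c) = N.tpt (μ y) ∧ N.Reach (N.head (g c)) (N.hpt (μ c))) ∧
    ∃ c₁ c₂, T.Adj y c₁ ∧ T.Adj y c₂ ∧ g c₁ ≠ g c₂

theorem IsTreeNetRecon.exists_isGateMap (hT : IsGeneTree T lvT ρT σ) (hN : N.Acyclic)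
    (hμ : IsTreeNetRecon T lvT t σ N sp μ) {y : V} (hy : y ∉ lvT) (hys : t y = .spec) :
    ∃ g, IsGateMap T N μ y g := by
  obtain ⟨w, hw, c₁, c₂, h₁, h₂, z₁, z₂, hz, ⟨e₁, he₁, rfl⟩, ⟨e₂, he₂, rfl⟩, hr₁, hr₂⟩ :=
    hμ.R2i y hy hys
  have hA : ∀ c ∈ {c | T.Adj y c}, ∃ g, N.tail g = w ∧ N.Reach (N.head g) (N.hpt (μ c)) := by
    refine fun c hc => hN.exists_arc_of_slt_inl (hw ▸ hμ.R3s c y (hT.vlt_of_adj hc) ?_)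
    rintro ⟨-, -, -, hyd⟩
    exact Event.noConfusion (hys.symm.trans hyd)
  obtain ⟨g, hg, c₁, hc₁, c₂, hc₂, hne⟩ := exists_selection_ne (hT.children_nontrivial hy) hA
    ⟨c₁, h₁, c₂, h₂, e₁, e₂, ⟨he₁, hr₁⟩, ⟨he₂, hr₂⟩, fun h => hz (congrArg N.head h)⟩
  have htpt : N.tpt (μ y) = w := by rw [hw]; rfl
  exact ⟨g, fun c hc => htpt ▸ hg c hc, c₁, c₂, hc₁, hc₂, hne⟩

theorem IsTreeNetRecon.exists_gateMaps [Nonempty F] (hT : IsGeneTree T lvT ρT σ)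
    (hN : N.Acyclic) (hμ : IsTreeNetRecon T lvT t σ N sp μ) :
    ∃ G : V → V → F, ∀ y, y ∉ lvT → t y = .spec → IsGateMap T N μ y (G y) := by
  have : ∀ y, ∃ g : V → F, y ∉ lvT → t y = .spec → IsGateMap T N μ y g := fun y => by
    by_cases hy : y ∉ lvT ∧ t y = .spec
    · exact (hμ.exists_isGateMap hT hN hy.1 hy.2).imp fun _ h _ _ => h
    · exact ⟨fun _ => Classical.arbitrary F, fun h h' => absurd ⟨h, h'⟩ hy⟩
  choose G hG using this
  exact ⟨G, hG⟩

variable (lvT t) in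
def LiftStep (G : V → V → F) (y x : V) (q q' : RootPath N ρ ⊕ RootPathArc N ρ) : Prop :=
  (unfoldGraph N ρ).sle q' q ∧
    (¬ ((x ∉ lvT ∧ t x = .dupl) ∧ (y ∉ lvT ∧ t y = .dupl)) → (unfoldGraph N ρ).slt q' q) ∧
    (t y = .spec → ∀ P, q = .inl P → (P.1 ++ [N.head (G y x)]) <+: ((unfoldGraph N ρ).hpt q').1)

theorem IsTreeNetRecon.exists_liftStep (hT : IsGeneTree T lvT ρT σ) (hN : N.Acyclic)
    (hμ : IsTreeNetRecon T lvT t σ N sp μ) {G : V → V → F}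
    (hG : ∀ y, y ∉ lvT → t y = .spec → IsGateMap T N μ y (G y)) {y x : V} (hyx : T.Adj y x)
    {q : RootPath N ρ ⊕ RootPathArc N ρ} (hq : LiesOver (μ y) q) :
    ∃ q', LiesOver (μ x) q' ∧ LiftStep lvT t G y x q q' := by
  have hy := hT.notMem_of_adj hyx
  cases hyt : t y with
  | spec =>
    obtain ⟨w, hw, -⟩ := hμ.R2i y hy hyt
    obtain ⟨P, rfl, hP⟩ := (hw ▸ hq : LiesOver (.inl w) q).exists_inl
    obtain ⟨hg, hgx⟩ := (hG y hy hyt).1 x hyx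
    obtain ⟨q', hq', hpre, hlt⟩ :=
      P.exists_liesOver_of_reach_head hN (hg.trans (by rw [hw, ← hP]; rfl)) hgx
    exact ⟨q', hq', .inr hlt, fun _ => hlt, fun _ _ hP' => Sum.inl_injective hP' ▸ hpre⟩
  | dupl =>
    have hys : t y ≠ .spec := by rw [hyt]; decide
    by_cases hxd : x ∉ lvT ∧ t x = .dupl
    · rcases hμ.R3d x y (hT.vlt_of_adj hyx) hxd.1 hy hxd.2 hyt with heq | hlt
      · exact ⟨q, heq ▸ hq, .inl rfl, fun h => absurd ⟨hxd, hy, hyt⟩ h, fun h => absurd h hys⟩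
      · obtain ⟨q', hq', hlt'⟩ := hq.exists_slt hN hlt
        exact ⟨q', hq', .inr hlt', fun _ => hlt', fun h => absurd h hys⟩
    · have hlt := hμ.R3s x y (hT.vlt_of_adj hyx) fun h => hxd ⟨h.1, h.2.2.1⟩
      obtain ⟨q', hq', hlt'⟩ := hq.exists_slt hN hlt
      exact ⟨q', hq', .inr hlt', fun _ => hlt', fun h => absurd h hys⟩

section LiftedMap

variable {G : V → V → F} {κ : V → RootPath N ρ ⊕ RootPathArc N ρ}

theorem LiftStep.sle_and_slt_of_vlt (hstep : ∀ y x, T.Adj y x → LiftStep lvT t G y x (κ y) (κ x))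
    {x y : V} (hxy : T.vlt x y) :
    (unfoldGraph N ρ).sle (κ x) (κ y) ∧
      (¬ (x ∉ lvT ∧ y ∉ lvT ∧ t x = .dupl ∧ t y = .dupl) → (unfoldGraph N ρ).slt (κ x) (κ y)) := by
  have := unfoldGraph_acyclic.sle_and_slt_of_transGen (p := fun x => x ∉ lvT ∧ t x = .dupl)
    (fun y x h => ⟨(hstep y x h).1, (hstep y x h).2.1⟩)
    (MGraph.transGen_of_reach_of_ne hxy.1 (Ne.symm hxy.2))
  exact ⟨this.1, fun h => this.2 fun h' => h ⟨h'.1.1, h'.2.1, h'.1.2, h'.2.2⟩⟩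

theorem IsTreeNetRecon.exists_separating_arcs_of_liftStep (hN : IsNetwork N lvN ρ)
    (hμ : IsTreeNetRecon T lvT t σ N sp μ)
    (hG : ∀ y, y ∉ lvT → t y = .spec → IsGateMap T N μ y (G y))
    (hκ : ∀ x, LiesOver (μ x) (κ x)) (hstep : ∀ y x, T.Adj y x → LiftStep lvT t G y x (κ y) (κ x))
    {x : V} (hx : x ∉ lvT) (hxs : t x = .spec) :
    ∃ d, κ x = .inl d ∧ d ∉ unfoldLeaves N ρ lvN ∧
      ∃ c₁ c₂, T.Adj x c₁ ∧ T.Adj x c₂ ∧ c₁ ≠ c₂ ∧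
        ∃ a₁ a₂ : RootPathArc N ρ, (unfoldGraph N ρ).tail a₁ = d ∧ (unfoldGraph N ρ).tail a₂ = d ∧
          (unfoldGraph N ρ).Reach ((unfoldGraph N ρ).head a₁) ((unfoldGraph N ρ).hpt (κ c₁)) ∧
          (unfoldGraph N ρ).Reach ((unfoldGraph N ρ).head a₂) ((unfoldGraph N ρ).hpt (κ c₂)) ∧
          ¬ (unfoldGraph N ρ).sle (.inr a₁) (.inr a₂) ∧
          ¬ (unfoldGraph N ρ).sle (.inr a₂) (.inr a₁) := by
  have := hN.finE
  obtain ⟨w, hw, -⟩ := hμ.R2i x hx hxs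
  obtain ⟨P, hP, hPw⟩ := (hw ▸ hκ x : LiesOver (.inl w) (κ x)).exists_inl
  obtain ⟨hgate, c₁, c₂, h₁, h₂, hne⟩ := hG x hx hxs
  have htail : ∀ c, T.Adj x c → N.tail (G x c) = P.last := fun c hc =>
    (hgate c hc).1.trans (by rw [hw, hPw]; rfl)
  let a c (hc : T.Adj x c) := P.arc hN.acyclic (G x c) (htail c hc)
  have hreach : ∀ c (hc : T.Adj x c),
      (unfoldGraph N ρ).Reach ((unfoldGraph N ρ).head (a c hc)) ((unfoldGraph N ρ).hpt (κ c)) :=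
    fun c hc => unfoldGraph_reach_iff.mpr ((hstep x c hc).2.2 hxs P hP)
  have hsep : ∀ {c c'} (hc : T.Adj x c) (hc' : T.Adj x c'), G x c ≠ G x c' →
      ¬ (unfoldGraph N ρ).sle (.inr (a c hc)) (.inr (a c' hc')) := fun hc hc' hcc' h =>
    h.elim (fun h => hcc' (congrArg (fun b : RootPathArc N ρ => b.1.2) (Sum.inr_injective h)))
      (unfoldGraph_acyclic.not_slt_of_tail_eq rfl)
  refine ⟨P, hP, ?_, c₁, c₂, h₁, h₂, fun h => hne (congrArg (G x) h), a c₁ h₁, a c₂ h₂, rfl, rfl,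
    hreach c₁ h₁, hreach c₂ h₂, hsep h₁ h₂ hne, hsep h₂ h₁ hne.symm⟩
  rintro ⟨l, hl, hPl⟩
  exact MGraph.outDeg_ne_zero ((htail c₁ h₁).trans (RootPath.last_eq_iff.mpr hPl))
    ((hN.leaf_iff l).mp hl).1

theorem IsTreeNetRecon.isMULRecon_of_liftStep (hN : IsNetwork N lvN ρ)
    (hsp : IsLeafLabeling N lvN sp) (hμ : IsTreeNetRecon T lvT t σ N sp μ)
    (hG : ∀ y, y ∉ lvT → t y = .spec → IsGateMap T N μ y (G y))
    (hκ : ∀ x, LiesOver (μ x) (κ x)) (hstep : ∀ y x, T.Adj y x → LiftStep lvT t G y x (κ y) (κ x)) :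
    IsMULRecon T lvT t σ (unfoldGraph N ρ) (unfoldLeaves N ρ lvN) (chiStar N ρ sp) κ where
  M0 x d hd hD1 := by
    have hμx := (hd ▸ hκ x).eq_inl_last
    have hdeg : N.outDeg d.last = 1 := outDeg_unfoldGraph hN.acyclic d ▸ hD1.2
    by_cases hx : x ∈ lvT
    · rw [Sum.inl_injective (hμx.symm.trans (hμ.R1 x hx)), ((hN.leaf_iff _).mp (hsp.mem _)).1]
        at hdeg
      exact zero_ne_one hdeg
    cases hxt : t x with
    | dupl =>
      obtain ⟨e, he⟩ := hμ.R2ii x hx hxt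
      exact Sum.inr_ne_inl (he.symm.trans hμx)
    | spec =>
      obtain ⟨hgate, c₁, c₂, h₁, h₂, hne⟩ := hG x hx hxt
      have htail : ∀ c, T.Adj x c → N.tail (G x c) = d.last := fun c hc =>
        (hgate c hc).1.trans (by rw [hμx]; rfl)
      exact MGraph.outDeg_ne_one (htail c₁ h₁) (htail c₂ h₂) hne hdeg
  M1 x hx := by
    obtain ⟨P, hP, hPx⟩ := (hμ.R1 x hx ▸ hκ x : LiesOver (.inl _) (κ x)).exists_inl
    exact ⟨P, hP, ⟨_, hsp.mem _, RootPath.last_eq_iff.mp hPx⟩, RootPath.last_eq_iff.mp hPx⟩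
  M2i _ hx hxs := hμ.exists_separating_arcs_of_liftStep hN hG hκ hstep hx hxs
  M2ii x hx hxd := by
    obtain ⟨e, he⟩ := hμ.R2ii x hx hxd
    exact (he ▸ hκ x : LiesOver (.inr e) (κ x)).exists_inr
  M3d _ _ hxy _ _ _ _ := (LiftStep.sle_and_slt_of_vlt hstep hxy).1
  M3s _ _ hxy := (LiftStep.sle_and_slt_of_vlt hstep hxy).2

end LiftedMap

theorem IsTreeNetRecon.exists_isMULRecon (hT : IsGeneTree T lvT ρT σ) (hN : IsNetwork N lvN ρ)
    (hsp : IsLeafLabeling N lvN sp) (hμ : IsTreeNetRecon T lvT t σ N sp μ) :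
    ∃ κ, IsMULRecon T lvT t σ (unfoldGraph N ρ) (unfoldLeaves N ρ lvN) (chiStar N ρ sp) κ := by
  have := hT.finV
  have : Nonempty F := by
    obtain ⟨⟨e, -⟩⟩ := (Nat.card_ne_zero.mp (hN.root_out ▸ one_ne_zero : N.outDeg ρ ≠ 0)).1
    exact ⟨e⟩
  obtain ⟨G, hG⟩ := hμ.exists_gateMaps hT hN.acyclic
  obtain ⟨κ, hκ, hstep⟩ := hT.acyclic.wellFounded_adj.exists_forall_of_unique_pred
    hT.eq_of_adj_of_adj (fun x q => LiesOver (μ x) q) (LiftStep lvT t G)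
    (fun x => exists_liesOver hN (μ x)) fun hyx hq => hμ.exists_liftStep hT hN.acyclic hG hyx hq
  exact ⟨κ, hμ.isMULRecon_of_liftStep hN hsp hG hκ hstep⟩

end Forward

end Unfolding

/-- For an event-labeled gene tree `(T;t,σ)` and a multi-arc free
    network `N` on `𝕊`, `N` is a species network for `(T;t,σ)` (i.e. there is a
    TreeNet-reconciliation map from `(T;t,σ)` to `N`) iff `(U*(N),χ*)` is a
    pseudo MUL-tree for `(T;t,σ)` (i.e. there is a MUL-reconciliation map from
    `(T;t,σ)` to `(U*(N),χ*)`). -/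
theorem species_network_iff_unfolding_recon {V E W F S : Type}
    (T : MGraph V E) (lvT : Set V) (ρT : V) (t : V → Event) (σ : V → S)
    (hT : IsGeneTree T lvT ρT σ)
    (N : MGraph W F) (lvN : Set W) (ρN : W) (sp : S → W)
    (hN : IsNetwork N lvN ρN) (hmf : N.MultiArcFree)
    (hsp : IsLeafLabeling N lvN sp) :
    (∃ μ : V → W ⊕ F, IsTreeNetRecon T lvT t σ N sp μ) ↔
      ∃ κ : V → RootPath N ρN ⊕ RootPathArc N ρN,
        IsMULRecon T lvT t σ (unfoldGraph N ρN) (unfoldLeaves N ρN lvN)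
          (chiStar N ρN sp) κ :=
  ⟨fun ⟨_, hμ⟩ => hμ.exists_isMULRecon hT hN hsp,
    fun ⟨_, hκ⟩ => ⟨_, hκ.isTreeNetRecon_fold hN.acyclic hmf⟩⟩

end Phylo
end
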